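/- Let X, Y, S, T be finite discrete random variables with Y = f(X) deterministic, S ↔ X ↔ T a Markov chain with both S and T functions of X (deterministic encoders). If I(T;Y) = H(Y), I(X;S,Y) = H(X), and I(S;T) = 0, then I(X;T) = H(Y). That is, the global optimum of the DisenIB objective achieves maximum compression. -/
import Mathlib


open Real

/-- A probability mass function on a finite type. -/
def IsPMF {Ω : Type*} [Fintype Ω] (p : Ω → ℝ) : Prop :=
  (∀ ω, 0 ≤ p ω) ∧ ∑ ω, p ω = 1

/-- Distribution (pushforward pmf) of the random variable `X` under `p`. -/
noncomputable def pd {Ω α : Type*} [Fintype Ω] [DecidableEq α]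
    (p : Ω → ℝ) (X : Ω → α) (x : α) : ℝ :=
  ∑ ω, if X ω = x then p ω else 0

/-- Shannon entropy of the random variable `X` under `p`. -/
noncomputable def ent {Ω α : Type*} [Fintype Ω] [Fintype α] [DecidableEq α]
    (p : Ω → ℝ) (X : Ω → α) : ℝ :=
  ∑ x, Real.negMulLog (pd p X x)

/-- Mutual information `I(X;Y)` under `p`. -/
noncomputable def MI {Ω α β : Type*} [Fintype Ω] [Fintype α] [Fintype β]
    [DecidableEq α] [DecidableEq β]
    (p : Ω → ℝ) (X : Ω → α) (Y : Ω → β) : ℝ :=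
  ent p X + ent p Y - ent p (fun ω => (X ω, Y ω))

/-- Conditional entropy `H(A|B)` under `p`. -/
noncomputable def condH {Ω α β : Type*} [Fintype Ω] [Fintype α] [Fintype β]
    [DecidableEq α] [DecidableEq β]
    (p : Ω → ℝ) (A : Ω → α) (B : Ω → β) : ℝ :=
  ent p (fun ω => (A ω, B ω)) - ent p B

/-- Markov chain `Y ↔ X ↔ T`: `Y` and `T` are conditionally independent given `X`. -/
def CondIndep {Ω α β γ : Type*} [Fintype Ω]
    [DecidableEq α] [DecidableEq β] [DecidableEq γ]
    (p : Ω → ℝ) (Y : Ω → β) (X : Ω → α) (T : Ω → γ) : Prop :=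
  ∀ (x : α) (y : β) (t : γ),
    pd p (fun ω => (Y ω, X ω, T ω)) (y, x, t) * pd p X x =
      pd p (fun ω => (Y ω, X ω)) (y, x) * pd p (fun ω => (X ω, T ω)) (x, t)

section aux
variable {Ω : Type*} [Fintype Ω] {p : Ω → ℝ}

lemma pd_nonneg {α : Type*} [DecidableEq α] (hp : ∀ ω, 0 ≤ p ω) (A : Ω → α) (x : α) :
    0 ≤ pd p A x := by
  unfold pd
  exact Finset.sum_nonneg fun ω _ => by split_ifs; exacts [hp ω, le_rfl]

lemma pd_sum_one {α : Type*} [Fintype α] [DecidableEq α] (hp : IsPMF p) (A : Ω → α) :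
    ∑ x, pd p A x = 1 := by
  unfold pd
  rw [Finset.sum_comm]
  simp only [Finset.sum_ite_eq, Finset.mem_univ, if_true]
  exact hp.2

lemma pd_comp {α κ : Type*} [Fintype α] [DecidableEq α] [DecidableEq κ]
    (A : Ω → α) (φ : α → κ) (y : κ) :
    pd p (fun ω => φ (A ω)) y = ∑ x, if φ x = y then pd p A x else 0 := by
  unfold pd
  have : ∀ x : α, (if φ x = y then (∑ ω, if A ω = x then p ω else 0) else 0)
      = ∑ ω, if φ x = y then (if A ω = x then p ω else 0) else 0 := by
    intro x; split_ifs with hc <;> simp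
  simp_rw [this]
  rw [Finset.sum_comm]
  apply Finset.sum_congr rfl; intro ω _
  rw [Finset.sum_eq_single (A ω)]
  · simp
  · intro x _ hx
    simp [Ne.symm hx]
  · simp

lemma negMulLog_sum_le {ι : Type*} (s : Finset ι) (a : ι → ℝ) (ha : ∀ i ∈ s, 0 ≤ a i) :
    Real.negMulLog (∑ i ∈ s, a i) ≤ ∑ i ∈ s, Real.negMulLog (a i) := by
  have key : ∀ i ∈ s, -(a i * Real.log (∑ j ∈ s, a j)) ≤ Real.negMulLog (a i) := by
    intro i hi
    rw [Real.negMulLog, neg_mul, neg_le_neg_iff]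
    rcases eq_or_lt_of_le (ha i hi) with h | h
    · simp [← h]
    · apply mul_le_mul_of_nonneg_left _ h.le
      exact Real.log_le_log h (Finset.single_le_sum ha hi)
  calc Real.negMulLog (∑ i ∈ s, a i) = ∑ i ∈ s, -(a i * Real.log (∑ j ∈ s, a j)) := by
        rw [Real.negMulLog, neg_mul, Finset.sum_neg_distrib, ← Finset.sum_mul]
    _ ≤ ∑ i ∈ s, Real.negMulLog (a i) := Finset.sum_le_sum key

lemma ent_comp_le {α κ : Type*} [Fintype α] [Fintype κ] [DecidableEq α] [DecidableEq κ]
    (hp : ∀ ω, 0 ≤ p ω) (A : Ω → α) (φ : α → κ) :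
    ent p (fun ω => φ (A ω)) ≤ ent p A := by
  unfold ent
  calc ∑ y, Real.negMulLog (pd p (fun ω => φ (A ω)) y)
      = ∑ y, Real.negMulLog (∑ x, if φ x = y then pd p A x else 0) := by
        simp_rw [pd_comp]
    _ ≤ ∑ y, ∑ x, Real.negMulLog (if φ x = y then pd p A x else 0) := by
        refine Finset.sum_le_sum fun y _ => negMulLog_sum_le _ _ fun x _ => ?_
        split_ifs; exacts [pd_nonneg hp A x, le_rfl]
    _ = ∑ y, ∑ x, (if φ x = y then Real.negMulLog (pd p A x) else 0) := by
        simp [apply_ite Real.negMulLog]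
    _ = ∑ x, Real.negMulLog (pd p A x) := by
        rw [Finset.sum_comm]; simp

lemma pd_fst {α β : Type*} [Fintype β] [DecidableEq α] [DecidableEq β]
    (A : Ω → α) (B : Ω → β) (a : α) :
    pd p A a = ∑ b, pd p (fun ω => (A ω, B ω)) (a, b) := by
  unfold pd
  rw [Finset.sum_comm]
  apply Finset.sum_congr rfl; intro ω _
  by_cases hA : A ω = a <;> simp [hA, Prod.ext_iff, ite_and]

lemma pd_snd {α β : Type*} [Fintype α] [DecidableEq α] [DecidableEq β]
    (A : Ω → α) (B : Ω → β) (b : β) :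
    pd p B b = ∑ a, pd p (fun ω => (A ω, B ω)) (a, b) := by
  unfold pd
  rw [Finset.sum_comm]
  apply Finset.sum_congr rfl; intro ω _
  by_cases hB : B ω = b <;> simp [hB, Prod.ext_iff, ite_and]

lemma gibbs_term {x a b : ℝ} (hx : 0 ≤ x) (hxa : x ≤ a) (hxb : x ≤ b) :
    Real.negMulLog x + x * Real.log a + x * Real.log b ≤ a * b - x := by
  rcases eq_or_lt_of_le hx with h | h
  · rw [← h]
    simp only [Real.negMulLog_zero, zero_mul, add_zero]
    nlinarith [mul_nonneg (hx.trans hxa) (hx.trans hxb)]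
  · have ha : 0 < a := h.trans_le hxa
    have hb : 0 < b := h.trans_le hxb
    have hlog : Real.log (a * b / x) ≤ a * b / x - 1 :=
      Real.log_le_sub_one_of_pos (by positivity)
    have h2 : x * Real.log (a * b / x) ≤ x * (a * b / x - 1) :=
      mul_le_mul_of_nonneg_left hlog hx
    have h3 : x * (a * b / x - 1) = a * b - x := by field_simp
    have h4 : x * Real.log (a * b / x) = x * Real.log a + x * Real.log b - x * Real.log x := by
      rw [Real.log_div (by positivity) h.ne', Real.log_mul ha.ne' hb.ne']; ring
    rw [Real.negMulLog, neg_mul]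
    nlinarith [h2, h3, h4]

lemma ent_pair_le {α β : Type*} [Fintype α] [Fintype β] [DecidableEq α] [DecidableEq β]
    (hp : IsPMF p) (A : Ω → α) (B : Ω → β) :
    ent p (fun ω => (A ω, B ω)) ≤ ent p A + ent p B := by
  set r := pd p (fun ω => (A ω, B ω)) with hr
  have hA : ent p A = ∑ ab : α × β, -(r ab * Real.log (pd p A ab.1)) := by
    unfold ent
    rw [Fintype.sum_prod_type]
    refine Finset.sum_congr rfl fun a _ => ?_
    rw [Real.negMulLog, neg_mul]
    nth_rewrite 1 [pd_fst A B a]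
    rw [Finset.sum_mul, ← Finset.sum_neg_distrib]
  have hB : ent p B = ∑ ab : α × β, -(r ab * Real.log (pd p B ab.2)) := by
    unfold ent
    rw [Fintype.sum_prod_type_right]
    refine Finset.sum_congr rfl fun b _ => ?_
    rw [Real.negMulLog, neg_mul]
    nth_rewrite 1 [pd_snd A B b]
    rw [Finset.sum_mul, ← Finset.sum_neg_distrib]
  have hmain : ∀ ab : α × β,
      Real.negMulLog (r ab) + r ab * Real.log (pd p A ab.1) + r ab * Real.log (pd p B ab.2)
        ≤ pd p A ab.1 * pd p B ab.2 - r ab := by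
    rintro ⟨a, b⟩
    refine gibbs_term (pd_nonneg hp.1 _ _) ?_ ?_
    · rw [pd_fst A B a]
      exact Finset.single_le_sum (fun b' _ => pd_nonneg hp.1 (fun ω => (A ω, B ω)) (a, b'))
        (Finset.mem_univ b)
    · rw [pd_snd A B b]
      exact Finset.single_le_sum (fun a' _ => pd_nonneg hp.1 (fun ω => (A ω, B ω)) (a', b))
        (Finset.mem_univ a)
  have hsum := Finset.sum_le_sum fun ab (_ : ab ∈ Finset.univ) => hmain ab
  have hzero : ∑ ab : α × β, (pd p A ab.1 * pd p B ab.2 - r ab) = 0 := by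
    rw [Finset.sum_sub_distrib, hr, pd_sum_one hp (fun ω => (A ω, B ω))]
    rw [Fintype.sum_prod_type]
    simp_rw [← Finset.sum_mul_sum]
    rw [pd_sum_one hp A, pd_sum_one hp B]
    norm_num
  have hentpair : ent p (fun ω => (A ω, B ω)) = ∑ ab : α × β, Real.negMulLog (r ab) := rfl
  rw [hzero] at hsum
  simp only [Finset.sum_add_distrib] at hsum
  rw [Finset.sum_neg_distrib] at hA hB
  linarith [hsum, hA, hB]

end aux

/-- DisenIB optimality: with deterministic `Y = f(X)`, deterministic encoders
`S = g(X)`, `T = h(X)`, if `I(T;Y) = H(Y)`, `I(X;S,Y) = H(X)` and `I(S;T) = 0`,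
then `I(X;T) = H(Y)` (maximum compression). -/


theorem stmt14 {Ω α β σ γ : Type*} [Fintype Ω] [Fintype α] [Fintype β] [Fintype σ] [Fintype γ]
    [DecidableEq α] [DecidableEq β] [DecidableEq σ] [DecidableEq γ]
    (p : Ω → ℝ) (hp : IsPMF p) (X : Ω → α) (f : α → β) (g : α → σ) (h : α → γ)
    (hty : MI p (fun ω => h (X ω)) (fun ω => f (X ω)) = ent p (fun ω => f (X ω)))
    (hxsy : MI p X (fun ω => (g (X ω), f (X ω))) = ent p X)
    (hst : MI p (fun ω => g (X ω)) (fun ω => h (X ω)) = 0) :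
    MI p X (fun ω => h (X ω)) = ent p (fun ω => f (X ω)) := by
  have hp0 := hp.1
  simp only [MI] at hty hxsy hst ⊢
  -- H(X, T) = H(X)
  have e1 : ent p (fun ω => (X ω, h (X ω))) = ent p X :=
    le_antisymm (ent_comp_le hp0 X (fun x => (x, h x)))
      (ent_comp_le hp0 (fun ω => (X ω, h (X ω))) Prod.fst)
  -- H(X, (S,Y)) = H(X)
  have e2 : ent p (fun ω => (X ω, (g (X ω), f (X ω)))) = ent p X :=
    le_antisymm (ent_comp_le hp0 X (fun x => (x, (g x, f x))))
      (ent_comp_le hp0 (fun ω => (X ω, (g (X ω), f (X ω)))) Prod.fst)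
  -- H(Y) ≤ H(T,Y)
  have i1 : ent p (fun ω => f (X ω)) ≤ ent p (fun ω => (h (X ω), f (X ω))) :=
    ent_comp_le hp0 (fun ω => (h (X ω), f (X ω))) Prod.snd
  -- H(S,T) ≤ H(X)
  have i2 : ent p (fun ω => (g (X ω), h (X ω))) ≤ ent p X :=
    ent_comp_le hp0 X (fun x => (g x, h x))
  -- H(S,Y) ≤ H(S) + H(Y)
  have i3 : ent p (fun ω => ((g (X ω)), f (X ω))) ≤
      ent p (fun ω => g (X ω)) + ent p (fun ω => f (X ω)) :=
    ent_pair_le hp (fun ω => g (X ω)) (fun ω => f (X ω))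
  linarith
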